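/- arXiv:0907.4384 — 7 statements merged into one kernel-verified Lean document; each statement's English description precedes it below -/
import Mathlib

section
/- For every integer n ≥ 2, the product of Γ(k/n) over all integers k with 1 ≤ k ≤ n and gcd(k,n) = 1 equals (2π)^(φ(n)/2) / exp(Λ(n)/2), where φ is Euler's totient function and Λ is the von Mangoldt function. -/
/-!
Pairing `k` with `n - k` and applying Euler's reflection formula `Γ(x) Γ(1 - x) = π / sin (π x)`,
the square of the product is `∏ π / sin (π k / n)`. Since `‖1 - e^{2πik/n}‖ = 2 sin (π k / n)` and
the `e^{2πik/n}` with `k` coprime to `n` are the primitive `n`-th roots of unity,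
`∏ 2 sin (π k / n) = Φₙ(1)`, which is `p` when `n` is a power of the prime `p` and `1` otherwise,
that is `exp Λ(n)`.
-/

open Real Finset Polynomial

theorem eval_one_cyclotomic_eq_exp_vonMangoldt {n : ℕ} (hn : n ≠ 1) :
    (cyclotomic n ℝ).eval 1 = exp (ArithmeticFunction.vonMangoldt n) := by
  by_cases h : IsPrimePow n
  · obtain ⟨p, k, hp, hk, rfl⟩ := h
    rw [← Nat.prime_iff] at hp
    have : Fact p.Prime := ⟨hp⟩
    obtain ⟨k, rfl⟩ := Nat.exists_eq_add_of_lt hk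
    rw [zero_add, eval_one_cyclotomic_prime_pow,
      ArithmeticFunction.vonMangoldt_apply_pow k.succ_ne_zero,
      ArithmeticFunction.vonMangoldt_apply_prime hp, exp_log (mod_cast hp.pos)]
  · rw [eval_one_cyclotomic_not_prime_pow, ArithmeticFunction.vonMangoldt_eq_zero_iff.2 h, exp_zero]
    rintro p hp (_ | k) rfl
    · exact hn (pow_zero p)
    · exact h ⟨p, k + 1, hp.prime, k.succ_pos, rfl⟩

theorem IsPrimitiveRoot.prod_primitiveRoots_eq_prod_pow {R M : Type*} [CommRing R] [IsDomain R]
    [CommMonoid M] {ζ : R} {n : ℕ} (hζ : IsPrimitiveRoot ζ n) (f : R → M) :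
    ∏ μ ∈ primitiveRoots n R, f μ = ∏ i ∈ {i ∈ range n | n.Coprime i}, f (ζ ^ i) := by
  rcases n.eq_zero_or_pos with rfl | hn
  · simp
  have : NeZero n := ⟨hn.ne'⟩
  symm
  refine prod_bij (fun i _ ↦ ζ ^ i) ?_ ?_ ?_ fun _ _ ↦ rfl
  · simp only [mem_filter, mem_range, mem_primitiveRoots hn]
    exact fun i hi ↦ hζ.pow_of_coprime i hi.2.symm
  · simp only [mem_filter, mem_range]
    exact fun i hi j hj ↦ hζ.pow_inj hi.1 hj.1
  · simp only [mem_filter, mem_range, mem_primitiveRoots hn, hζ.isPrimitiveRoot_iff]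
    rintro μ ⟨i, hin, hi, rfl⟩
    exact ⟨i, ⟨hin, hi.symm⟩, rfl⟩

theorem IsPrimitiveRoot.eval_one_cyclotomic_eq_prod {R : Type*} [CommRing R] [IsDomain R]
    {ζ : R} {n : ℕ} (hζ : IsPrimitiveRoot ζ n) :
    (cyclotomic n R).eval 1 = ∏ i ∈ {i ∈ range n | n.Coprime i}, (1 - ζ ^ i) := by
  rw [cyclotomic_eq_prod_X_sub_primitiveRoots hζ, eval_prod,
    hζ.prod_primitiveRoots_eq_prod_pow]
  simp

theorem norm_one_sub_exp_two_pi_I_div_pow {n k : ℕ} (hk : k ≤ n) :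
    ‖1 - Complex.exp (2 * π * Complex.I / n) ^ k‖ = 2 * sin (π * (k / n)) := by
  have hsin : 0 ≤ sin (π * (k / n)) :=
    sin_nonneg_of_nonneg_of_le_pi (by positivity)
      (mul_le_of_le_one_right pi_pos.le (div_le_one_of_le₀ (mod_cast hk) n.cast_nonneg))
  rw [← Complex.exp_nat_mul, norm_sub_rev,
    show (k : ℂ) * (2 * π * Complex.I / n) = Complex.I * ((2 * π * (k / n) : ℝ) : ℂ) by
      push_cast; ring,
    Complex.norm_exp_I_mul_ofReal_sub_one, mul_div_right_comm, mul_div_cancel_left₀ _ two_ne_zero,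
    Real.norm_eq_abs, abs_of_nonneg (by positivity)]

theorem prod_two_sin_pi_mul_div_eq_exp_vonMangoldt {n : ℕ} (hn : n ≠ 1) :
    ∏ k ∈ {k ∈ range n | n.Coprime k}, 2 * sin (π * (k / n)) =
      exp (ArithmeticFunction.vonMangoldt n) := by
  obtain rfl | hn0 := eq_or_ne n 0
  · simp
  have hζ := Complex.isPrimitiveRoot_exp n hn0
  have h := congrArg norm hζ.eval_one_cyclotomic_eq_prod
  rw [← map_cyclotomic n (algebraMap ℝ ℂ), eval_one_map,
    eval_one_cyclotomic_eq_exp_vonMangoldt hn, Complex.coe_algebraMap, Complex.norm_real,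
    Real.norm_of_nonneg (exp_pos _).le, norm_prod] at h
  rw [h]
  refine prod_congr rfl fun k hk ↦ (norm_one_sub_exp_two_pi_I_div_pow ?_).symm
  exact (mem_range.1 (mem_filter.1 hk).1).le

theorem prod_filter_coprime_range_sub {M : Type*} [CommMonoid M] {n : ℕ} (hn : n ≠ 1)
    (f : ℕ → M) :
    ∏ k ∈ {k ∈ range n | n.Coprime k}, f (n - k) = ∏ k ∈ {k ∈ range n | n.Coprime k}, f k := by
  have hmem : ∀ k ∈ {k ∈ range n | n.Coprime k},
      n - k ∈ {k ∈ range n | n.Coprime k} ∧ 0 < k := by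
    simp only [mem_filter, mem_range]
    rintro k ⟨hkn, hk⟩
    have hk0 : 0 < k := Nat.pos_of_ne_zero fun h ↦ hn (by simpa [h] using hk)
    exact ⟨⟨by omega, (Nat.coprime_self_sub_right hkn.le).2 hk⟩, hk0⟩
  refine prod_nbij' (n - ·) (n - ·) (fun k hk ↦ (hmem k hk).1) (fun k hk ↦ (hmem k hk).1)
    (fun k hk ↦ ?_) (fun k hk ↦ ?_) fun _ _ ↦ rfl <;>
  · have := mem_range.1 (mem_filter.1 hk).1
    omega

theorem sq_prod_Gamma_div {n : ℕ} (hn : n ≠ 1) :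
    (∏ k ∈ {k ∈ range n | n.Coprime k}, Gamma (k / n)) ^ 2 =
      ∏ k ∈ {k ∈ range n | n.Coprime k}, π / sin (π * (k / n)) := by
  rw [sq]
  nth_rw 2 [← prod_filter_coprime_range_sub hn]
  rw [← prod_mul_distrib]
  refine prod_congr rfl fun k hk ↦ ?_
  have hkn : k < n := mem_range.1 (mem_filter.1 hk).1
  rw [← Gamma_mul_Gamma_one_sub, Nat.cast_sub hkn.le, sub_div,
    div_self (Nat.cast_ne_zero.2 (by omega))]

theorem filter_gcd_eq_one_Icc_eq_filter_coprime_range {n : ℕ} (hn : n ≠ 1) :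
    {k ∈ Icc 1 n | k.gcd n = 1} = {k ∈ range n | n.Coprime k} := by
  ext k
  simp only [mem_filter, mem_Icc, mem_range, Nat.coprime_comm (m := n), Nat.Coprime]
  constructor
  · rintro ⟨⟨hk1, hkn⟩, hk⟩
    refine ⟨lt_of_le_of_ne hkn ?_, hk⟩
    rintro rfl
    exact hn (by simpa using hk)
  · rintro ⟨hkn, hk⟩
    refine ⟨⟨Nat.pos_of_ne_zero ?_, hkn.le⟩, hk⟩
    rintro rfl
    exact hn (by simpa using hk)

theorem gamma_prod_coprime (n : ℕ) (hn : 2 ≤ n) :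
    ∏ k ∈ (Finset.Icc 1 n).filter (fun k => Nat.gcd k n = 1),
        Real.Gamma ((k : ℝ) / n) =
      (2 * π) ^ ((n.totient : ℝ) / 2) /
        Real.exp (ArithmeticFunction.vonMangoldt n / 2) := by
  have hP : 0 ≤ ∏ k ∈ (Finset.Icc 1 n).filter (fun k => Nat.gcd k n = 1), Gamma ((k : ℝ) / n) :=
    prod_nonneg fun k hk ↦ (Gamma_pos_of_pos <|
      div_pos (Nat.cast_pos.2 (mem_Icc.1 (mem_filter.1 hk).1).1) (by positivity)).le
  rw [filter_gcd_eq_one_Icc_eq_filter_coprime_range (by omega)] at hP ⊢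
  refine (pow_left_inj₀ hP (by positivity) two_ne_zero).1 ?_
  calc (∏ k ∈ {k ∈ range n | n.Coprime k}, Gamma (k / n)) ^ 2
      = ∏ k ∈ {k ∈ range n | n.Coprime k}, 2 * π / (2 * sin (π * (k / n))) := by
        rw [sq_prod_Gamma_div (by omega)]
        exact prod_congr rfl fun k _ ↦ (mul_div_mul_left _ _ two_ne_zero).symm
    _ = (2 * π) ^ n.totient / exp (ArithmeticFunction.vonMangoldt n) := by
        rw [prod_div_distrib, prod_const, prod_two_sin_pi_mul_div_eq_exp_vonMangoldt (by omega),
          Nat.totient_eq_card_coprime]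
    _ = _ := by
        rw [div_pow, ← rpow_natCast, ← rpow_mul_natCast (by positivity), ← exp_nat_mul]
        push_cast
        rw [div_mul_cancel₀ _ two_ne_zero, mul_div_cancel₀ _ two_ne_zero]
end

section
/- For every integer n ≥ 2 that is not a prime power, the product of Γ(k/n) over all integers k with 1 ≤ k ≤ n and gcd(k,n) = 1 equals (2π)^(φ(n)/2). -/
/-!
Reflection `Γ(x) Γ(1 - x) = π / sin(πx)` pairs `k` with `n - k`, which permutes the residues
prime to `n`, so the square of the product is `∏ π / sin(πk/n)`. The numbers `2 sin(πk/n)` are the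
distances `|1 - ζᵏ|` from `1` to the primitive `n`-th roots of unity, so their product is `|Φₙ(1)|`,
and `Φₙ(1) = 1` when `n` is not a prime power.
-/

open Real Finset Polynomial

namespace Nat

/-- Residues in `[0, n)`: for `n = 1` this is `{0}`, not `{1}`. -/
def totatives (n : ℕ) : Finset ℕ := {k ∈ range n | k.Coprime n}

variable {n k : ℕ}

theorem mem_totatives : k ∈ n.totatives ↔ k < n ∧ k.Coprime n := by
  rw [totatives, mem_filter, mem_range]

theorem card_totatives (n : ℕ) : #n.totatives = n.totient := by
  simp only [totatives, totient, coprime_comm]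

theorem pos_of_mem_totatives (hn : n ≠ 1) (hk : k ∈ n.totatives) : 0 < k := by
  rw [mem_totatives] at hk
  by_contra! hk0
  obtain rfl : k = 0 := by omega
  exact hn (coprime_zero_left n |>.mp hk.2)

theorem sub_mem_totatives (hn : n ≠ 1) (hk : k ∈ n.totatives) : n - k ∈ n.totatives := by
  have hk0 := pos_of_mem_totatives hn hk
  rw [mem_totatives] at hk ⊢
  exact ⟨by omega, (coprime_self_sub_left hk.1.le).mpr hk.2⟩

theorem filter_Icc_gcd_eq_totatives (hn : n ≠ 1) : {k ∈ Icc 1 n | k.gcd n = 1} = n.totatives := by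
  ext k
  simp only [mem_filter, mem_Icc, mem_totatives, Coprime]
  constructor
  · rintro ⟨⟨hk1, hkn⟩, hgcd⟩
    refine ⟨lt_of_le_of_ne hkn ?_, hgcd⟩
    rintro rfl
    exact hn (by rwa [gcd_self] at hgcd)
  · rintro ⟨hkn, hgcd⟩
    exact ⟨⟨pos_of_mem_totatives hn (mem_totatives.mpr ⟨hkn, hgcd⟩), hkn.le⟩, hgcd⟩

end Nat

theorem IsPrimitiveRoot.prod_one_sub_pow_totatives {K : Type*} [CommRing K] [IsDomain K] {ζ : K}
    {n : ℕ} [NeZero n] (hζ : IsPrimitiveRoot ζ n) :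
    ∏ k ∈ n.totatives, (1 - ζ ^ k) = eval 1 (cyclotomic n K) := by
  rw [cyclotomic_eq_prod_X_sub_primitiveRoots hζ, eval_prod]
  refine prod_nbij (ζ ^ ·) (fun k hk => ?_) ?_ (fun ξ hξ => ?_) (fun k _ => by simp)
  · rw [Nat.mem_totatives] at hk
    exact (mem_primitiveRoots (NeZero.pos n)).mpr (hζ.pow_of_coprime k hk.2)
  · exact hζ.injOn_pow.mono fun k hk => by simpa using (Nat.mem_totatives.mp hk).1
  · obtain ⟨k, hkn, hk, rfl⟩ :=
      hζ.isPrimitiveRoot_iff.mp ((mem_primitiveRoots (NeZero.pos n)).mp hξ)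
    exact ⟨k, Nat.mem_totatives.mpr ⟨hkn, hk⟩, rfl⟩

theorem prod_two_mul_sin_totatives {n : ℕ} (hn : n ≠ 0) :
    ∏ k ∈ n.totatives, 2 * sin (π * (k / n)) = ‖eval 1 (cyclotomic n ℂ)‖ := by
  have : NeZero n := ⟨hn⟩
  rw [← (Complex.isPrimitiveRoot_exp n hn).prod_one_sub_pow_totatives, norm_prod]
  refine prod_congr rfl fun k hk => ?_
  have hkn : (k : ℝ) / n ≤ 1 :=
    div_le_one_of_le₀ (mod_cast (Nat.mem_totatives.mp hk).1.le) (Nat.cast_nonneg n)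
  have hsin : 0 ≤ sin (π * (k / n)) :=
    sin_nonneg_of_nonneg_of_le_pi (by positivity) (mul_le_of_le_one_right pi_pos.le hkn)
  have hpow : Complex.exp (2 * π * Complex.I / n) ^ k =
      Complex.exp (Complex.I * ↑(2 * π * (k / n))) := by
    rw [← Complex.exp_nat_mul]; push_cast; ring_nf
  rw [hpow, norm_sub_rev, Complex.norm_exp_I_mul_ofReal_sub_one,
    show 2 * π * (k / n) / 2 = π * (k / n) by ring,
    Real.norm_of_nonneg (mul_nonneg zero_le_two hsin)]

theorem sq_prod_Gamma_of_involution {ι : Type*} {s : Finset ι} (σ : ι → ι)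
    (hσ : ∀ i ∈ s, σ i ∈ s) (hσσ : ∀ i ∈ s, σ (σ i) = i) (f : ι → ℝ)
    (hf : ∀ i ∈ s, f (σ i) = 1 - f i) :
    (∏ i ∈ s, Gamma (f i)) ^ 2 = ∏ i ∈ s, π / sin (π * f i) := by
  have hsymm : ∏ i ∈ s, Gamma (f i) = ∏ i ∈ s, Gamma (1 - f i) :=
    prod_nbij' σ σ hσ hσ hσσ hσσ fun i hi => by rw [hf i hi, sub_sub_cancel]
  calc (∏ i ∈ s, Gamma (f i)) ^ 2 = ∏ i ∈ s, Gamma (f i) * Gamma (1 - f i) := by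
        rw [sq, prod_mul_distrib, ← hsymm]
    _ = ∏ i ∈ s, π / sin (π * f i) := prod_congr rfl fun i _ => Gamma_mul_Gamma_one_sub _

theorem sq_prod_Gamma_totatives {n : ℕ} (hn : n ≠ 1) :
    (∏ k ∈ n.totatives, Gamma (k / n)) ^ 2 = ∏ k ∈ n.totatives, π / sin (π * (k / n)) := by
  refine sq_prod_Gamma_of_involution (n - ·) (fun k => Nat.sub_mem_totatives hn)
    (fun k hk => Nat.sub_sub_self (Nat.mem_totatives.mp hk).1.le) _ fun k hk => ?_
  have hkn := (Nat.mem_totatives.mp hk).1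
  have : (n : ℝ) ≠ 0 := Nat.cast_ne_zero.mpr (by omega)
  rw [Nat.cast_sub hkn.le]
  field_simp

theorem gamma_prod_coprime_not_prime_pow (n : ℕ) (hn : 2 ≤ n) (h : ¬ IsPrimePow n) :
    ∏ k ∈ (Finset.Icc 1 n).filter (fun k => Nat.gcd k n = 1),
        Real.Gamma ((k : ℝ) / n) = (2 * π) ^ ((n.totient : ℝ) / 2) := by
  have hn1 : n ≠ 1 := by omega
  have hsin : ∏ k ∈ n.totatives, 2 * sin (π * (k / n)) = 1 := by
    rw [prod_two_mul_sin_totatives (by omega), eval_one_cyclotomic_not_prime_pow, norm_one]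
    intro p hp k hpk
    have hk : k ≠ 0 := by rintro rfl; simp at hpk; omega
    exact h (isPrimePow_nat_iff n |>.mpr ⟨p, k, hp, Nat.pos_of_ne_zero hk, hpk⟩)
  have hsq : (∏ k ∈ n.totatives, Gamma (k / n)) ^ 2 = (2 * π) ^ n.totient := by
    calc _ = ∏ k ∈ n.totatives, 2 * π / (2 * sin (π * (k / n))) := by
          rw [sq_prod_Gamma_totatives hn1]
          exact prod_congr rfl fun k _ => (mul_div_mul_left _ _ two_ne_zero).symm
      _ = (2 * π) ^ n.totient := by
          rw [prod_div_distrib, prod_const, Nat.card_totatives, hsin, div_one]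
  have hnonneg : 0 ≤ ∏ k ∈ n.totatives, Gamma (k / n) :=
    prod_nonneg fun k hk =>
      (Gamma_pos_of_pos (by have := Nat.pos_of_mem_totatives hn1 hk; positivity)).le
  rw [Nat.filter_Icc_gcd_eq_totatives hn1, ← sqrt_sq hnonneg, hsq, sqrt_eq_rpow, ← rpow_natCast,
    ← rpow_mul (by positivity)]
  ring_nf
end

section
/- For every prime p and integer r ≥ 1, with n = p^r, the product of Γ(k/n) over all integers k with 1 ≤ k ≤ n and gcd(k,n) = 1 equals (2π)^(φ(n)/2) / √p. -/
/-!
Euler's reflection formula `Γ(x) Γ(1 - x) = π / sin (π x)` and the identity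
`∏_{k=1}^{n-1} (1 - ζ^k) = n` for a primitive `n`-th root of unity `ζ` give
`∏_{k=1}^{n} Γ(k/n) = (2π)^((n-1)/2) / √n`. For `n = p m` the factors with `p ∣ k` form the
same product for `m`, so the factors with `p ∤ k` multiply to `(2π)^((n-m)/2) / √p`. For
`n = p^r` these are the `k` coprime to `n`, and `n - n/p = φ(n)`.
-/

open Real Finset

lemma sin_pi_mul_pos {x : ℝ} (h0 : 0 < x) (h1 : x < 1) : 0 < sin (π * x) :=
  sin_pos_of_pos_of_lt_pi (by positivity) (by nlinarith [pi_pos])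

lemma prod_range_two_mul_sin_pi_mul (n : ℕ) :
    ∏ k ∈ range n, 2 * sin (π * ((k + 1 : ℝ) / (n + 1))) = n + 1 := by
  have hζ := Complex.isPrimitiveRoot_exp (n + 1) n.succ_ne_zero
  have hfactor : ∀ k ∈ range n,
      ‖1 - Complex.exp (2 * π * Complex.I / ↑(n + 1)) ^ (k + 1)‖ =
        2 * sin (π * ((k + 1 : ℝ) / (n + 1))) := by
    intro k hk
    have hx0 : (0 : ℝ) < (k + 1) / (n + 1) := by positivity
    have hx1 : (k + 1 : ℝ) / (n + 1) < 1 := by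
      rw [div_lt_one (by positivity)]; exact_mod_cast Nat.succ_lt_succ (mem_range.mp hk)
    rw [← Complex.exp_nat_mul, norm_sub_rev,
      show ((k + 1 : ℕ) : ℂ) * (2 * π * Complex.I / ↑(n + 1)) =
        Complex.I * ↑(π * ((k + 1 : ℝ) / (n + 1)) * 2) by push_cast; ring,
      Complex.norm_exp_I_mul_ofReal_sub_one, mul_div_cancel_right₀ _ two_ne_zero,
      Real.norm_of_nonneg (by linarith [sin_pi_mul_pos hx0 hx1])]
  rw [← prod_congr rfl hfactor, ← norm_prod, hζ.prod_one_sub_pow_eq_order]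
  norm_cast

lemma prod_range_gamma_mul_gamma_one_sub (n : ℕ) :
    ∏ k ∈ range n, Gamma ((k + 1 : ℝ) / (n + 1)) * Gamma (1 - (k + 1 : ℝ) / (n + 1)) =
      (2 * π) ^ n / (n + 1) := by
  have hreflect : ∀ k ∈ range n,
      Gamma ((k + 1 : ℝ) / (n + 1)) * Gamma (1 - (k + 1 : ℝ) / (n + 1)) =
        2 * π / (2 * sin (π * ((k + 1 : ℝ) / (n + 1)))) := by
    intro k _
    rw [Gamma_mul_Gamma_one_sub, mul_div_mul_left _ _ two_ne_zero]
  rw [prod_congr rfl hreflect, prod_div_distrib, prod_range_two_mul_sin_pi_mul, prod_const,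
    card_range]

lemma sq_prod_range_gamma_div (n : ℕ) :
    (∏ k ∈ range n, Gamma ((k + 1 : ℝ) / (n + 1))) ^ 2 = (2 * π) ^ n / (n + 1) := by
  rw [← prod_range_gamma_mul_gamma_one_sub, prod_mul_distrib, sq]
  congr 1
  rw [← prod_range_reflect]
  refine prod_congr rfl fun k hk => ?_
  have hkn : k + 1 ≤ n := mem_range.mp hk
  rw [Nat.sub_sub, add_comm 1 k, Nat.cast_sub hkn]
  congr 1
  field_simp
  push_cast
  ring

lemma prod_Icc_gamma_div (n : ℕ) (hn : 0 < n) :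
    ∏ k ∈ Icc 1 n, Gamma ((k : ℝ) / n) = (2 * π) ^ (((n : ℝ) - 1) / 2) / sqrt n := by
  obtain ⟨N, rfl⟩ := Nat.exists_eq_succ_of_ne_zero hn.ne'
  have hshift : ∏ k ∈ Icc 1 (N + 1), Gamma ((k : ℝ) / ↑(N + 1)) =
      ∏ k ∈ range N, Gamma ((k + 1 : ℝ) / (N + 1)) := by
    rw [prod_Icc_succ_top (by omega), div_self (by positivity), Gamma_one, mul_one]
    simp_rw [← Nat.cast_add_one]
    rw [range_eq_Ico, prod_Ico_add' fun k : ℕ => Gamma ((k : ℝ) / ↑(N + 1))]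
    rfl
  have hpos : 0 < ∏ k ∈ range N, Gamma ((k + 1 : ℝ) / (N + 1)) :=
    prod_pos fun k _ => Gamma_pos_of_pos (by positivity)
  rw [hshift, ← sq_eq_sq₀ hpos.le (by positivity), sq_prod_range_gamma_div, div_pow,
    sq_sqrt (by positivity), ← rpow_mul_natCast (by positivity), ← rpow_natCast]
  push_cast
  ring_nf

lemma prod_Icc_filter_dvd {M : Type*} [CommMonoid M] (f : ℕ → M) {p : ℕ} (hp : 0 < p)
    (m : ℕ) :
    ∏ k ∈ (Icc 1 (p * m)).filter (p ∣ ·), f k = ∏ j ∈ Icc 1 m, f (p * j) := by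
  refine (prod_nbij (p * ·) (fun j hj => ?_) (fun i _ j _ h => Nat.eq_of_mul_eq_mul_left hp h)
    (fun k hk => ?_) fun _ _ => rfl).symm
  · obtain ⟨h1, h2⟩ := mem_Icc.mp hj
    simp only [mem_filter, mem_Icc, dvd_mul_right, and_true]
    exact ⟨Nat.one_le_iff_ne_zero.mpr (by positivity), Nat.mul_le_mul_left p h2⟩
  · simp only [coe_filter, mem_Icc, Set.mem_ofPred_eq] at hk
    obtain ⟨⟨h1, h2⟩, j, rfl⟩ := hk
    exact ⟨j, mem_Icc.mpr ⟨Nat.pos_of_mul_pos_left h1, Nat.le_of_mul_le_mul_left h2 hp⟩,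
      rfl⟩

lemma prod_Icc_filter_not_dvd_gamma_div {p m : ℕ} (hp : 0 < p) (hm : 0 < m) :
    ∏ k ∈ (Icc 1 (p * m)).filter (¬ p ∣ ·), Gamma ((k : ℝ) / ↑(p * m)) =
      (2 * π) ^ (((p * m : ℝ) - m) / 2) / sqrt p := by
  have hsplit := prod_filter_mul_prod_filter_not (Icc 1 (p * m)) (p ∣ ·)
    fun k => Gamma ((k : ℝ) / ↑(p * m))
  have hmultiples :
      ∏ j ∈ Icc 1 m, Gamma (↑(p * j) / ↑(p * m)) = ∏ j ∈ Icc 1 m, Gamma (j / m) :=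
    prod_congr rfl fun j _ => by push_cast; rw [mul_div_mul_left _ _ (by positivity)]
  rw [prod_Icc_filter_dvd _ hp, hmultiples, prod_Icc_gamma_div m hm,
    prod_Icc_gamma_div (p * m) (by positivity), mul_comm, ← eq_div_iff (by positivity)] at hsplit
  rw [hsplit,
    show ((p * m : ℝ) - m) / 2 = ((↑(p * m) : ℝ) - 1) / 2 - ((m : ℝ) - 1) / 2 by
      push_cast; ring,
    rpow_sub (by positivity), Nat.cast_mul, sqrt_mul (by positivity)]
  field_simp

theorem gamma_prod_coprime_prime_pow (p r : ℕ) (hp : p.Prime) (hr : 1 ≤ r) (n : ℕ)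
    (hn : n = p ^ r) :
    ∏ k ∈ (Finset.Icc 1 n).filter (fun k => Nat.gcd k n = 1),
        Real.Gamma ((k : ℝ) / n) =
      (2 * π) ^ ((n.totient : ℝ) / 2) / Real.sqrt p := by
  obtain ⟨s, rfl⟩ : ∃ s, r = s + 1 := ⟨r - 1, by omega⟩
  have hcoprime : ∀ k, Nat.gcd k n = 1 ↔ ¬ p ∣ k := fun k => by
    rw [hn, ← Nat.Coprime, Nat.coprime_pow_right_iff s.succ_pos, Nat.coprime_comm,
      hp.coprime_iff_not_dvd]
  have htotient : (n.totient : ℝ) = p * p ^ s - p ^ s := by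
    rw [hn, Nat.totient_prime_pow_succ hp]
    push_cast [Nat.cast_sub hp.one_le]
    ring
  rw [filter_congr fun k _ => hcoprime k, htotient, hn, pow_succ']
  exact_mod_cast prod_Icc_filter_not_dvd_gamma_div hp.pos (pow_pos hp.pos s)
end

section
/- The integral of log Γ(x) over the interval (0,1) equals (1/2)·log(2π). -/
/-! Euler's reflection formula `Γ(x) Γ(1 - x) = π / sin (π x)` together with the substitution
`x ↦ 1 - x` gives `2 ∫₀¹ log Γ = log π - ∫₀¹ log (sin (π x))`, and the classical value
`∫₀^π log (sin x) = -π log 2` finishes the computation. -/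

open Real MeasureTheory intervalIntegral Set

theorem continuousOn_log_Gamma : ContinuousOn (fun x => log (Gamma x)) (Ioi 0) :=
  convexOn_log_Gamma.continuousOn isOpen_Ioi

theorem intervalIntegrable_log_Gamma {a b : ℝ} (ha : 0 ≤ a) (hb : 0 ≤ b) :
    IntervalIntegrable (fun x => log (Gamma x)) volume a b := by
  have hshift : IntervalIntegrable (fun x => log (Gamma (x + 1))) volume a b :=
    (continuousOn_log_Gamma.comp (continuous_add_const 1).continuousOn fun x hx =>
      show 0 < x + 1 by linarith [(le_min ha hb).trans hx.1]).intervalIntegrable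
  refine (hshift.sub intervalIntegrable_log').congr fun x hx => ?_
  have hx0 : 0 < x := (le_min ha hb).trans_lt hx.1
  simp only [Gamma_add_one hx0.ne', log_mul hx0.ne' (Gamma_pos_of_pos hx0).ne']
  ring

theorem log_Gamma_add_log_Gamma_one_sub {x : ℝ} (hx0 : 0 < x) (hx1 : x < 1) :
    log (Gamma x) + log (Gamma (1 - x)) = log π - log (sin (π * x)) := by
  have hsin : 0 < sin (π * x) :=
    sin_pos_of_pos_of_lt_pi (by positivity) (by nlinarith [pi_pos])
  rw [← log_mul (Gamma_pos_of_pos hx0).ne' (Gamma_pos_of_pos (by linarith)).ne',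
    Gamma_mul_Gamma_one_sub, log_div pi_ne_zero hsin.ne']

theorem integral_log_sin_pi_mul : ∫ x in (0 : ℝ)..1, log (sin (π * x)) = -log 2 := by
  rw [integral_comp_mul_left (fun x => log (sin x)) pi_ne_zero, mul_zero, mul_one,
    integral_log_sin_zero_pi, smul_eq_mul]
  field_simp

theorem integral_log_gamma :
    ∫ x in (0 : ℝ)..1, Real.log (Real.Gamma x) = (1 / 2) * Real.log (2 * π) := by
  have hint := intervalIntegrable_log_Gamma le_rfl zero_le_one
  have hint_reflect : IntervalIntegrable (fun x => log (Gamma (1 - x))) volume 0 1 := by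
    simpa using (hint.comp_sub_left 1).symm
  have hsin : IntervalIntegrable (fun x => log (sin (π * x))) volume 0 1 := by
    simpa [pi_ne_zero] using (intervalIntegrable_log_sin (a := 0) (b := π)).comp_mul_left (c := π)
  have hreflect : ∫ x in (0 : ℝ)..1, log (Gamma (1 - x)) = ∫ x in (0 : ℝ)..1, log (Gamma x) := by
    simpa using integral_comp_sub_left (fun x => log (Gamma x)) (1 : ℝ) (a := 0) (b := 1)
  have htwice : 2 * ∫ x in (0 : ℝ)..1, log (Gamma x) = log π + log 2 := calc
    2 * ∫ x in (0 : ℝ)..1, log (Gamma x)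
        = ∫ x in (0 : ℝ)..1, (log (Gamma x) + log (Gamma (1 - x))) := by
      rw [integral_add hint hint_reflect, hreflect, two_mul]
    _ = ∫ x in (0 : ℝ)..1, (log π - log (sin (π * x))) := by
      refine integral_congr_ae ?_
      filter_upwards [Measure.ae_ne volume 1] with x hx1 hx
      rw [uIoc_of_le zero_le_one] at hx
      exact log_Gamma_add_log_Gamma_one_sub hx.1 (hx.2.lt_of_ne hx1)
    _ = log π + log 2 := by
      rw [integral_sub intervalIntegrable_const hsin, integral_log_sin_pi_mul,
        intervalIntegral.integral_const, sub_zero, one_smul, sub_neg_eq_add]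
  rw [log_mul two_ne_zero pi_ne_zero]
  linarith
end

section
/- For every integer N ≥ 2, lcm(1, 2, …, N) equals (1/2)·(∏_{r ∈ F_N, r ≤ 1/2} 2 sin(πr))², where F_N is the set of rationals in (0,1) with reduced denominator at most N. -/
/-!
For `n ≥ 2` the value `Φₙ(1)` of the cyclotomic polynomial is `p` when `n` is a power of the
prime `p` and `1` otherwise, i.e. `Φₙ(1) = exp Λ(n)`; hence
`∏_{2 ≤ n ≤ N} Φₙ(1) = exp ψ(N) = lcm(1, …, N)`. On the other hand `Φₙ(1) = ∏ (1 - ζᵏ)` over the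
primitive roots `ζᵏ = e^{2πik/n}`, and `|1 - e^{2πik/n}| = 2 sin(πk/n)`, so `lcm(1, …, N)` is the
product of `2 sin(πr)` over `F_N`. The symmetry `r ↦ 1 - r` of `F_N` pairs off the factors on
either side of `r = 1/2`, whose own factor is `2 sin(π/2) = 2`.
-/

open Real Finset Polynomial ArithmeticFunction

theorem IsPrimitiveRoot.prod_primitiveRoots {R M : Type*} [CommRing R] [IsDomain R] [CommMonoid M]
    {ζ : R} {n : ℕ} [NeZero n] (h : IsPrimitiveRoot ζ n) (f : R → M) :
    ∏ μ ∈ primitiveRoots n R, f μ = ∏ k ∈ range n with k.Coprime n, f (ζ ^ k) := by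
  refine (prod_nbij (ζ ^ ·) (fun k hk ↦ ?_) (fun i hi j hj hij ↦ ?_) (fun μ hμ ↦ ?_)
    (fun _ _ ↦ rfl)).symm
  · rw [mem_filter, mem_range] at hk
    exact (mem_primitiveRoots (NeZero.pos n)).2 (h.pow_of_coprime k hk.2)
  · simp only [mem_coe, mem_filter, mem_range] at hi hj
    exact h.pow_inj hi.1 hj.1 hij
  · rw [mem_coe, mem_primitiveRoots (NeZero.pos n), h.isPrimitiveRoot_iff] at hμ
    obtain ⟨k, hk, hcop, rfl⟩ := hμ
    exact ⟨k, mem_filter.2 ⟨mem_range.2 hk, hcop⟩, rfl⟩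

theorem norm_eval_one_cyclotomic_eq_exp_vonMangoldt {n : ℕ} (hn : 2 ≤ n) :
    ‖(cyclotomic n ℂ).eval 1‖ = exp (Λ n) := by
  by_cases hpp : IsPrimePow n
  · obtain ⟨p, k, hp, hk, rfl⟩ := hpp
    rw [← Nat.prime_iff] at hp
    have : Fact p.Prime := ⟨hp⟩
    obtain ⟨k, rfl⟩ := Nat.exists_eq_add_one_of_ne_zero hk.ne'
    rw [eval_one_cyclotomic_prime_pow, Complex.norm_natCast, vonMangoldt_apply_pow hk.ne',
      vonMangoldt_apply_prime hp, exp_log (mod_cast hp.pos)]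
  · have hnot : ∀ {p : ℕ}, p.Prime → ∀ k : ℕ, p ^ k ≠ n := by
      rintro p hp (_ | k) rfl
      · simp at hn
      · exact hpp ⟨p, k + 1, hp.prime, k.succ_pos, rfl⟩
    rw [eval_one_cyclotomic_not_prime_pow hnot, norm_one, vonMangoldt_eq_zero_iff.2 hpp, exp_zero]

theorem norm_eval_one_cyclotomic_eq_prod_two_sin {n : ℕ} [NeZero n] :
    ‖(cyclotomic n ℂ).eval 1‖ = ∏ k ∈ range n with k.Coprime n, 2 * sin (π * (k / n)) := by
  have hζ := Complex.isPrimitiveRoot_exp n (NeZero.ne n)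
  rw [cyclotomic_eq_prod_X_sub_primitiveRoots hζ, eval_prod, hζ.prod_primitiveRoots, norm_prod]
  refine prod_congr rfl fun k hk ↦ ?_
  have hkn : (k : ℝ) ≤ n := mod_cast (mem_range.1 (mem_filter.1 hk).1).le
  have hexp : Complex.exp (2 * π * Complex.I / n) ^ k =
      Complex.exp (Complex.I * ↑(2 * π * (k / n))) := by
    rw [← Complex.exp_nat_mul]
    congr 1
    push_cast
    ring
  rw [eval_sub, eval_X, eval_C, hexp, norm_sub_rev, Complex.norm_exp_I_mul_ofReal_sub_one,
    show 2 * π * (k / n) / 2 = π * (k / n) by ring, Real.norm_of_nonneg]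
  exact mul_nonneg zero_le_two <| sin_nonneg_of_nonneg_of_le_pi (by positivity) <|
    mul_le_of_le_one_right pi_pos.le (div_le_one_of_le₀ hkn n.cast_nonneg)

theorem prod_two_sin_eq_exp_vonMangoldt {n : ℕ} (hn : 2 ≤ n) :
    ∏ k ∈ range n with k.Coprime n, 2 * sin (π * (k / n)) = exp (Λ n) := by
  have : NeZero n := ⟨by omega⟩
  rw [← norm_eval_one_cyclotomic_eq_prod_two_sin, norm_eval_one_cyclotomic_eq_exp_vonMangoldt hn]

theorem Rat.num_natCast_div_of_coprime {k n : ℕ} (hn : 0 < n) (h : k.Coprime n) :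
    ((k : ℚ) / n).num = k := by
  simpa using Rat.num_div_eq_of_coprime (a := k) (b := n) (mod_cast hn) h

theorem Rat.den_natCast_div_of_coprime {k n : ℕ} (hn : 0 < n) (h : k.Coprime n) :
    ((k : ℚ) / n).den = n := by
  simpa using Rat.den_div_eq_of_coprime (a := k) (b := n) (mod_cast hn) h

def farey (N : ℕ) : Finset ℚ :=
  ((Icc 2 N).sigma fun n ↦ {k ∈ range n | k.Coprime n}).image fun x ↦ (x.2 : ℚ) / x.1

theorem mem_farey {N : ℕ} {r : ℚ} : r ∈ farey N ↔ 0 < r ∧ r < 1 ∧ r.den ≤ N := by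
  constructor
  · rw [farey, mem_image]
    rintro ⟨⟨n, k⟩, hnk, rfl⟩
    simp only [mem_sigma, mem_Icc, mem_filter, mem_range] at hnk
    obtain ⟨⟨hn, hnN⟩, hkn, hcop⟩ := hnk
    have hk : k ≠ 0 := by
      rintro rfl
      exact absurd (Nat.coprime_zero_left n |>.1 hcop) (by omega)
    refine ⟨by positivity, (div_lt_one (by positivity)).2 (mod_cast hkn), ?_⟩
    rwa [Rat.den_natCast_div_of_coprime (by omega) hcop]
  · rintro ⟨hr0, hr1, hrN⟩
    have hnum : 0 < r.num := Rat.num_pos.2 hr0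
    have hlt : r.num < r.den := Rat.num_lt_denom_iff.2 hr1
    rw [farey, mem_image]
    refine ⟨⟨r.den, r.num.natAbs⟩, ?_, ?_⟩
    · simp only [mem_sigma, mem_Icc, mem_filter, mem_range]
      exact ⟨⟨by omega, hrN⟩, by omega, r.reduced⟩
    · rw [Nat.cast_natAbs, Int.cast_abs, abs_of_pos (Int.cast_pos.2 hnum), Rat.num_div_den]

theorem prod_farey {M : Type*} [CommMonoid M] (N : ℕ) (f : ℚ → M) :
    ∏ r ∈ farey N, f r = ∏ n ∈ Icc 2 N, ∏ k ∈ range n with k.Coprime n, f (k / n) := by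
  rw [farey, prod_image, prod_sigma]
  rintro ⟨n, k⟩ hnk ⟨m, j⟩ hmj h
  simp only [mem_coe, mem_sigma, mem_Icc, mem_filter, mem_range] at hnk hmj h
  have hnm : n = m := by
    rw [← Rat.den_natCast_div_of_coprime (by omega) hnk.2.2, h,
      Rat.den_natCast_div_of_coprime (by omega) hmj.2.2]
  subst hnm
  have hkj : (k : ℤ) = j := by
    rw [← Rat.num_natCast_div_of_coprime (by omega) hnk.2.2, h,
      Rat.num_natCast_div_of_coprime (by omega) hmj.2.2]
  rw [Int.natCast_inj.1 hkj]

theorem one_sub_mem_farey {N : ℕ} {r : ℚ} (hr : r ∈ farey N) : 1 - r ∈ farey N := by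
  rw [mem_farey] at hr ⊢
  refine ⟨by linarith, by linarith, ?_⟩
  simpa using hr.2.2

theorem prod_farey_mul_apply_half_eq_sq {M : Type*} [CommMonoid M] {N : ℕ} (hN : 2 ≤ N)
    (f : ℚ → M) (hf : ∀ r, f (1 - r) = f r) :
    (∏ r ∈ farey N, f r) * f (1 / 2) = (∏ r ∈ farey N with r ≤ 1 / 2, f r) ^ 2 := by
  have half_mem : (1 / 2 : ℚ) ∈ farey N := by
    norm_num [mem_farey, hN]
  have hunion : {r ∈ farey N | r ≤ 1 / 2} ∪ {r ∈ farey N | 1 / 2 ≤ r} = farey N := by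
    rw [← filter_or]
    exact filter_true_of_mem fun r _ ↦ le_total r (1 / 2)
  have hinter : {r ∈ farey N | r ≤ 1 / 2} ∩ {r ∈ farey N | 1 / 2 ≤ r} = {1 / 2} := by
    rw [← filter_and]
    ext r
    simp only [mem_filter, mem_singleton, ← le_antisymm_iff]
    constructor
    · exact And.right
    · rintro rfl; exact ⟨half_mem, rfl⟩
  have hreflect : ∏ r ∈ farey N with 1 / 2 ≤ r, f r = ∏ r ∈ farey N with r ≤ 1 / 2, f r := by
    refine prod_nbij' (1 - ·) (1 - ·) (fun r hr ↦ ?_) (fun r hr ↦ ?_) (fun r _ ↦ sub_sub_cancel 1 r)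
      (fun r _ ↦ sub_sub_cancel 1 r) (fun r _ ↦ (hf r).symm) <;>
    · rw [mem_filter] at hr ⊢
      exact ⟨one_sub_mem_farey hr.1, by linarith [hr.2]⟩
  calc (∏ r ∈ farey N, f r) * f (1 / 2)
      = (∏ r ∈ {r ∈ farey N | r ≤ 1 / 2} ∪ {r ∈ farey N | 1 / 2 ≤ r}, f r) *
          ∏ r ∈ {r ∈ farey N | r ≤ 1 / 2} ∩ {r ∈ farey N | 1 / 2 ≤ r}, f r := by
        rw [hunion, hinter, prod_singleton]
    _ = (∏ r ∈ farey N with r ≤ 1 / 2, f r) ^ 2 := by rw [prod_union_inter, hreflect, sq]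

theorem lcm_Icc_eq_prod_farey_two_sin (N : ℕ) :
    (((Icc 1 N).lcm id : ℕ) : ℝ) = ∏ r ∈ farey N, 2 * sin (π * r) := by
  have hpsi : Chebyshev.psi N = ∑ n ∈ Icc 2 N, Λ n := by
    rw [Chebyshev.psi, Nat.floor_natCast]
    refine (sum_subset (fun n hn ↦ ?_) fun n hn hn' ↦ ?_).symm
    · simp only [mem_Icc, mem_Ioc] at hn ⊢; omega
    · obtain rfl : n = 1 := by simp only [mem_Icc, mem_Ioc] at hn hn'; omega
      exact vonMangoldt_apply_one
  calc (((Icc 1 N).lcm id : ℕ) : ℝ) = exp (Chebyshev.psi N) := by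
        rw [Chebyshev.psi_eq_log_lcmUpto, exp_log (mod_cast Nat.lcmUpto_pos N), Nat.lcmUpto]
    _ = ∏ n ∈ Icc 2 N, exp (Λ n) := by rw [hpsi, exp_sum]
    _ = ∏ r ∈ farey N, 2 * sin (π * r) := by
      rw [prod_farey]
      refine prod_congr rfl fun n hn ↦ ?_
      rw [← prod_two_sin_eq_exp_vonMangoldt (mem_Icc.1 hn).1]
      push_cast
      rfl

theorem lcm_eq_sin_prod (N : ℕ) (hN : 2 ≤ N) :
    (((Finset.Icc 1 N).lcm id : ℕ) : ℝ) =
      (1 / 2) *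
        (∏ᶠ r ∈ {r : ℚ | 0 < r ∧ r < 1 ∧ r.den ≤ N ∧ r ≤ 1 / 2},
            (2 * Real.sin (π * (r : ℝ)))) ^ 2 := by
  have hset : {r : ℚ | 0 < r ∧ r < 1 ∧ r.den ≤ N ∧ r ≤ 1 / 2} = ↑{r ∈ farey N | r ≤ 1 / 2} := by
    ext r
    simp [mem_farey, and_assoc]
  have hsym : ∀ r : ℚ, 2 * sin (π * ((1 - r : ℚ) : ℝ)) = 2 * sin (π * r) := fun r ↦ by
    rw [Rat.cast_sub, Rat.cast_one, mul_one_sub, sin_pi_sub]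
  have hhalf : 2 * sin (π * ((1 / 2 : ℚ) : ℝ)) = 2 := by norm_num [mul_one_div]
  rw [hset, finprod_mem_coe_finset, ← prod_farey_mul_apply_half_eq_sq hN _ hsym,
    ← lcm_Icc_eq_prod_farey_two_sin, hhalf]
  ring
end

section
/- For every integer n ≥ 2 with n ≡ 2 (mod 4), the product of Γ(k/n) over integers k with 1 ≤ k ≤ n and gcd(k,n) = 1 equals (2π)^(φ(n)/2)/√2 when n = 2, and equals (2π)^(φ(n)/2) when n > 2. -/
open Real Finset

private lemma mem_aux {n k : ℕ} (hn : 2 ≤ n)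
    (hk : k ∈ (Finset.Icc 1 n).filter (fun k => Nat.gcd k n = 1)) :
    1 ≤ k ∧ k < n ∧ Nat.gcd k n = 1 := by
  simp only [mem_filter, mem_Icc] at hk
  obtain ⟨⟨h1, h2⟩, h3⟩ := hk
  refine ⟨h1, ?_, h3⟩
  rcases h2.lt_or_eq with h | rfl
  · exact h
  · rw [Nat.gcd_self] at h3; omega

private lemma abs_one_sub_exp (θ : ℝ) (h0 : 0 ≤ Real.sin (θ / 2)) :
    ‖1 - Complex.exp (θ * Complex.I)‖ = 2 * Real.sin (θ / 2) := by
  have h1 : ‖1 - Complex.exp (θ * Complex.I)‖ ^ 2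
      = (2 * Real.sin (θ / 2)) ^ 2 := by
    rw [Complex.sq_norm, Complex.normSq_apply]
    simp only [Complex.sub_re, Complex.sub_im, Complex.one_re, Complex.one_im,
      Complex.exp_ofReal_mul_I_re, Complex.exp_ofReal_mul_I_im]
    have h2 := Real.cos_two_mul (θ / 2)
    have h3 := Real.sin_sq_add_cos_sq (θ / 2)
    have h5 := Real.sin_two_mul (θ / 2)
    have h4 : 2 * (θ / 2) = θ := by ring
    rw [h4] at h2 h5
    rw [h2, h5]
    linear_combination (4 * (Real.cos (θ / 2) ^ 2 - 1)) * h3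
  have h5 : (0:ℝ) ≤ ‖1 - Complex.exp (θ * Complex.I)‖ :=
    norm_nonneg _
  nlinarith

private lemma auxNotPrimePow {n : ℕ} (hn2 : 2 < n) (h : n % 4 = 2) :
    ∀ {p : ℕ}, p.Prime → ∀ k : ℕ, p ^ k ≠ n := by
  intro p hp k hpk
  have h2 : 2 ∣ p ^ k := by omega
  have hp2 : p = 2 :=
    ((Nat.prime_dvd_prime_iff_eq Nat.prime_two hp).mp (Nat.prime_two.dvd_of_dvd_pow h2)).symm
  subst hp2
  rcases le_or_gt k 1 with hk | hk
  · have : 2 ^ k ≤ 2 := by interval_cases k <;> norm_num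
    omega
  · have h4 : (4 : ℕ) ∣ 2 ^ k := by
      have := pow_dvd_pow 2 hk
      simpa using this
    omega

private lemma sin_prod (n : ℕ) (hn : 2 ≤ n)
    (hnp : ∀ {p : ℕ}, p.Prime → ∀ k : ℕ, p ^ k ≠ n) :
    ∏ k ∈ (Finset.Icc 1 n).filter (fun k => Nat.gcd k n = 1),
      (2 * Real.sin (π * ((k : ℝ) / n))) = 1 := by
  have hn0 : n ≠ 0 := by omega
  haveI : NeZero n := ⟨hn0⟩
  have hnpos : 0 < n := by omega
  set S := (Finset.Icc 1 n).filter (fun k => Nat.gcd k n = 1) with hSdef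
  set ζ := Complex.exp (2 * π * Complex.I / n) with hζdef
  have hζ : IsPrimitiveRoot ζ n := Complex.isPrimitiveRoot_exp n hn0
  have hprod : ∏ k ∈ S, ((1 : ℂ) - ζ ^ k) = 1 := by
    have hcyc := Polynomial.cyclotomic_eq_prod_X_sub_primitiveRoots hζ
    have he : Polynomial.eval 1 (Polynomial.cyclotomic n ℂ)
        = ∏ μ ∈ primitiveRoots n ℂ, (1 - μ) := by
      rw [hcyc, Polynomial.eval_prod]
      simp
    rw [Polynomial.eval_one_cyclotomic_not_prime_pow hnp] at he
    refine Eq.trans ?_ he.symm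
    refine Finset.prod_nbij (fun k => ζ ^ k) ?_ ?_ ?_ (fun k _ => rfl)
    · intro k hk
      obtain ⟨h1, h2, h3⟩ := mem_aux hn hk
      rw [mem_primitiveRoots hnpos]
      exact hζ.pow_of_coprime k h3
    · intro a ha b hb hab
      obtain ⟨-, ha2, -⟩ := mem_aux hn ha
      obtain ⟨-, hb2, -⟩ := mem_aux hn hb
      exact hζ.pow_inj ha2 hb2 hab
    · intro ξ hξ
      rw [Finset.coe_filter]
      rw [mem_coe, mem_primitiveRoots hnpos] at hξ
      obtain ⟨i, hik, hic, hie⟩ := hζ.isPrimitiveRoot_iff.mp hξ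
      refine ⟨i, ?_, hie⟩
      have hi1 : 1 ≤ i := by
        rcases Nat.eq_zero_or_pos i with rfl | h
        · exfalso; rw [Nat.coprime_zero_left] at hic; omega
        · exact h
      simp only [Set.mem_setOf_eq, mem_Icc]
      exact ⟨⟨hi1, hik.le⟩, hic⟩
  have habs : ‖∏ k ∈ S, ((1 : ℂ) - ζ ^ k)‖ = ‖(1 : ℂ)‖ := congrArg (‖·‖) hprod
  rw [norm_prod, norm_one] at habs
  rw [← habs]
  refine Finset.prod_congr rfl fun k hk => ?_
  obtain ⟨h1, h2, h3⟩ := mem_aux hn hk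
  have hθ : (ζ : ℂ) ^ k = Complex.exp (((2 * π * k / n : ℝ) : ℂ) * Complex.I) := by
    rw [hζdef, ← Complex.exp_nat_mul]
    push_cast
    congr 1
    field_simp
  rw [hθ, abs_one_sub_exp]
  · congr 1
    ring
  · apply Real.sin_nonneg_of_nonneg_of_le_pi
    · positivity
    · rw [div_div]
      rw [div_le_iff₀ (by positivity)]
      have : (k : ℝ) ≤ n := by exact_mod_cast h2.le
      nlinarith [Real.pi_pos]

theorem gamma_prod_coprime_two_mod_four (n : ℕ) (hn : 2 ≤ n) (h : n % 4 = 2) :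
    ∏ k ∈ (Finset.Icc 1 n).filter (fun k => Nat.gcd k n = 1),
        Real.Gamma ((k : ℝ) / n) =
      if n = 2 then (2 * π) ^ ((n.totient : ℝ) / 2) / Real.sqrt 2
      else (2 * π) ^ ((n.totient : ℝ) / 2) := by
  by_cases h2 : n = 2
  · subst h2
    rw [if_pos rfl]
    have hfil : (Finset.Icc 1 2).filter (fun k => Nat.gcd k 2 = 1) = {1} := by decide
    rw [hfil, Finset.prod_singleton]
    norm_num
    rw [Real.Gamma_one_half_eq]
    rw [← Real.sqrt_eq_rpow, Real.sqrt_mul (by norm_num : (0:ℝ) ≤ 2)]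
    rw [mul_comm (Real.sqrt 2), mul_div_assoc, div_self (by positivity), mul_one]
  · rw [if_neg h2]
    have hn2 : 2 < n := lt_of_le_of_ne hn (Ne.symm h2)
    have hn0 : (n : ℝ) ≠ 0 := by positivity
    have hnp : ∀ {p : ℕ}, p.Prime → ∀ k : ℕ, p ^ k ≠ n := auxNotPrimePow hn2 h
    set S := (Finset.Icc 1 n).filter (fun k => Nat.gcd k n = 1) with hSdef
    set P := ∏ k ∈ S, Real.Gamma ((k : ℝ) / n) with hPdef
    have hcard : S.card = n.totient := by
      have hS : S = (range n).filter (fun a => n.Coprime a) := by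
        ext k
        simp only [hSdef, mem_filter, mem_Icc, mem_range, Nat.Coprime, Nat.gcd_comm n k]
        constructor
        · rintro ⟨⟨hk1, hk2⟩, hk3⟩
          refine ⟨?_, hk3⟩
          rcases hk2.lt_or_eq with hlt | rfl
          · exact hlt
          · rw [Nat.gcd_self] at hk3; omega
        · rintro ⟨hk1, hk3⟩
          refine ⟨⟨?_, hk1.le⟩, hk3⟩
          rcases Nat.eq_zero_or_pos k with rfl | hpos
          · rw [Nat.gcd_zero_left] at hk3; omega
          · exact hpos
      rw [hS, Nat.totient]
    -- reindexing k ↦ n - k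
    have hre : P = ∏ k ∈ S, Real.Gamma (1 - (k : ℝ) / n) := by
      rw [hPdef]
      refine Finset.prod_nbij' (fun k => n - k) (fun k => n - k) ?_ ?_ ?_ ?_ ?_
      · intro k hk
        obtain ⟨h1, hlt, h3⟩ := mem_aux hn hk
        simp only [hSdef, mem_filter, mem_Icc]
        refine ⟨⟨by omega, by omega⟩, ?_⟩
        have e1 := Nat.gcd_sub_self_right (Nat.sub_le n k)
        rw [Nat.sub_sub_self hlt.le] at e1
        rw [← e1, Nat.gcd_sub_self_left hlt.le, Nat.gcd_comm]
        exact h3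
      · intro k hk
        obtain ⟨h1, hlt, h3⟩ := mem_aux hn hk
        simp only [hSdef, mem_filter, mem_Icc]
        refine ⟨⟨by omega, by omega⟩, ?_⟩
        have e1 := Nat.gcd_sub_self_right (Nat.sub_le n k)
        rw [Nat.sub_sub_self hlt.le] at e1
        rw [← e1, Nat.gcd_sub_self_left hlt.le, Nat.gcd_comm]
        exact h3
      · intro k hk; obtain ⟨h1, hlt, -⟩ := mem_aux hn hk; show n - (n - k) = k; omega
      · intro k hk; obtain ⟨h1, hlt, -⟩ := mem_aux hn hk; show n - (n - k) = k; omega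
      · intro k hk
        obtain ⟨h1, hlt, -⟩ := mem_aux hn hk
        congr 1
        rw [Nat.cast_sub hlt.le]
        field_simp
        ring
    have hP2 : P * P = (2 * π) ^ n.totient := by
      have step1 : P * P = ∏ k ∈ S, (Real.Gamma ((k : ℝ) / n) * Real.Gamma (1 - (k : ℝ) / n)) := by
        rw [Finset.prod_mul_distrib, ← hPdef, ← hre]
      rw [step1]
      have step2 : ∀ k ∈ S, Real.Gamma ((k : ℝ) / n) * Real.Gamma (1 - (k : ℝ) / n)
          = (2 * π) / (2 * Real.sin (π * ((k : ℝ) / n))) := by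
        intro k hk
        rw [Real.Gamma_mul_Gamma_one_sub]
        rw [eq_comm]
        exact mul_div_mul_left _ _ two_ne_zero
      rw [Finset.prod_congr rfl step2, Finset.prod_div_distrib,
        sin_prod n hn hnp, div_one, Finset.prod_const, hcard]
    obtain ⟨m, hm⟩ := Nat.totient_even hn2
    have hPpos : 0 < P := by
      rw [hPdef]
      apply Finset.prod_pos
      intro k hk
      obtain ⟨h1, hlt, -⟩ := mem_aux hn hk
      apply Real.Gamma_pos_of_pos
      have : (0 : ℝ) < k := by exact_mod_cast h1
      positivity
    have hrhs : (2 * π) ^ ((n.totient : ℝ) / 2) = (2 * π) ^ m := by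
      have : ((n.totient : ℝ)) / 2 = (m : ℝ) := by
        rw [hm]; push_cast; ring
      rw [this, Real.rpow_natCast]
    rw [hrhs]
    have hb : (0 : ℝ) < (2 * π) ^ m := by positivity
    have : P * P = (2 * π) ^ m * (2 * π) ^ m := by
      rw [hP2, hm, ← pow_add]
    exact (mul_self_inj_of_nonneg hPpos.le hb.le).mp this
end

section
/- For every integer N ≥ 1, the product of Γ(r) over all rationals r in (0,1) with reduced denominator at most N equals (2π)^(|F_N|/2) · lcm(1,2,…,N)^(−1/2), where |F_N| = Σ_{n=2}^{N} φ(n). -/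
/-!
The reflection formula `Γ(r) Γ(1 - r) = π / sin (π r)` pairs `r` with `1 - r`, which lies in `F_N`
as well, so the square of the product is `(2π)^|F_N| / ∏_{r ∈ F_N} 2 sin (π r)`. Grouping `F_N` by
denominators, `∏_{k < n, (k, n) = 1} 2 sin (π k / n) = ∏_ζ |1 - ζ| = Φ_n(1)`, the product running
over the primitive `n`-th roots of unity. Finally `Φ_n(1) = e^{Λ(n)}`, so the sine product is
`e^{ψ(N)} = lcm(1, …, N)`.
-/

open Real Finset Polynomial ArithmeticFunction

theorem norm_one_sub_exp_mul_I {θ : ℝ} (h0 : 0 ≤ θ) (h1 : θ ≤ 2 * π) :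
    ‖1 - Complex.exp (θ * Complex.I)‖ = 2 * sin (θ / 2) := by
  rw [norm_sub_rev, mul_comm, Complex.norm_exp_I_mul_ofReal_sub_one, Real.norm_eq_abs,
    abs_of_nonneg]
  exact mul_nonneg zero_le_two (sin_nonneg_of_nonneg_of_le_pi (by linarith) (by linarith))

theorem eval_one_cyclotomic_eq_prod_two_sin {n : ℕ} (hn : n ≠ 0) :
    (cyclotomic n ℝ).eval 1 = ∏ k ∈ (range n).filter n.Coprime, 2 * sin (π * k / n) := by
  have : NeZero n := ⟨hn⟩
  set ζ : ℂ := Complex.exp (2 * π * Complex.I / n)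
  have hζ : IsPrimitiveRoot ζ n := Complex.isPrimitiveRoot_exp n hn
  have h_roots : (cyclotomic n ℂ).eval 1 = ∏ k ∈ (range n).filter n.Coprime, (1 - ζ ^ k) := by
    rw [cyclotomic_eq_prod_X_sub_primitiveRoots hζ, eval_prod]
    simp only [eval_sub, eval_X, eval_C]
    refine (prod_nbij (ζ ^ ·) (fun k hk => ?_) (fun k hk l hl hkl => ?_) (fun μ hμ => ?_)
      fun _ _ => rfl).symm
    · rw [mem_filter, mem_range] at hk
      exact (mem_primitiveRoots (Nat.pos_of_ne_zero hn)).2 (hζ.pow_of_coprime k hk.2.symm)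
    · simp only [coe_filter, mem_range, Set.mem_ofPred_eq] at hk hl
      exact hζ.pow_inj hk.1 hl.1 hkl
    · obtain ⟨k, hk, hkn, rfl⟩ :=
        hζ.isPrimitiveRoot_iff.1 (isPrimitiveRoot_of_mem_primitiveRoots hμ)
      exact ⟨k, by simpa using ⟨hk, hkn.symm⟩, rfl⟩
  have h_real : (((cyclotomic n ℝ).eval 1 : ℝ) : ℂ) = (cyclotomic n ℂ).eval 1 := by
    simpa using (eval_map Complex.ofRealHom (1 : ℝ) (p := cyclotomic n ℝ)).symm
  rw [← abs_of_nonneg (cyclotomic_nonneg n (le_refl (1 : ℝ))), ← Real.norm_eq_abs,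
    ← Complex.norm_real, h_real, h_roots, norm_prod]
  refine prod_congr rfl fun k hk => ?_
  have hθ : 2 * π * k / n ≤ 2 * π := by
    rw [mem_filter, mem_range] at hk
    rw [div_le_iff₀ (by positivity)]
    gcongr
    exact_mod_cast hk.1.le
  have hζk : ζ ^ k = Complex.exp ((2 * π * k / n : ℝ) * Complex.I) := by
    rw [← Complex.exp_nat_mul]
    push_cast
    congr 1
    ring
  rw [hζk, norm_one_sub_exp_mul_I (by positivity) hθ, show 2 * π * k / n / 2 = π * k / n by ring]

theorem exp_vonMangoldt_eq_eval_one_cyclotomic {n : ℕ} (hn : 2 ≤ n) :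
    exp (Λ n) = (cyclotomic n ℝ).eval 1 := by
  by_cases h : IsPrimePow n
  · obtain ⟨p, k, hp, hk, rfl⟩ := (isPrimePow_nat_iff n).1 h
    obtain ⟨k, rfl⟩ := Nat.exists_eq_succ_of_ne_zero hk.ne'
    have := Fact.mk hp
    rw [vonMangoldt_apply_pow hk.ne', vonMangoldt_apply_prime hp,
      exp_log (by exact_mod_cast hp.pos), eval_one_cyclotomic_prime_pow]
  · rw [vonMangoldt_eq_zero_iff.2 h, exp_zero, eval_one_cyclotomic_not_prime_pow]
    rintro p hp (_ | k) rfl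
    · simp at hn
    · exact h ⟨p, k + 1, hp.prime, k.succ_pos, rfl⟩

theorem prod_Icc_eval_one_cyclotomic (N : ℕ) :
    ∏ n ∈ Icc 2 N, (cyclotomic n ℝ).eval 1 = Nat.lcmUpto N := calc
  _ = ∏ n ∈ Icc 2 N, exp (Λ n) :=
    prod_congr rfl fun n hn => (exp_vonMangoldt_eq_eval_one_cyclotomic (mem_Icc.1 hn).1).symm
  _ = exp (Chebyshev.psi N) := by
    rw [← exp_sum, Chebyshev.psi_eq_sum_Icc, Nat.floor_natCast]
    congr 1
    refine sum_subset (Icc_subset_Icc_left zero_le_two) fun n hn hn2 => ?_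
    obtain rfl | rfl : n = 0 ∨ n = 1 := by
      rw [mem_Icc] at hn hn2
      omega
    all_goals simp
  _ = Nat.lcmUpto N := by
    rw [Chebyshev.psi_eq_log_lcmUpto, exp_log (by exact_mod_cast Nat.lcmUpto_pos N)]

theorem Rat.den_natCast_div_natCast_of_coprime {k n : ℕ} (hn : n ≠ 0) (h : n.Coprime k) :
    ((k : ℚ) / n).den = n := by
  simpa using
    Rat.den_div_eq_of_coprime (a := (k : ℤ)) (b := (n : ℤ)) (by omega) (by simpa using h.symm)

theorem natCast_div_natCast_injective {n : ℕ} (hn : n ≠ 0) :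
    Function.Injective fun k : ℕ => (k : ℚ) / n :=
  fun _ _ h => by exact_mod_cast (div_left_inj' (Nat.cast_ne_zero.2 hn)).1 h

def fareyFiber (n : ℕ) : Finset ℚ :=
  ((range n).filter n.Coprime).image fun k : ℕ => (k : ℚ) / n

def fareyFinset (N : ℕ) : Finset ℚ := (Icc 2 N).biUnion fareyFiber

theorem den_of_mem_fareyFiber {n : ℕ} {r : ℚ} (hr : r ∈ fareyFiber n) : r.den = n := by
  obtain ⟨k, hk, rfl⟩ := mem_image.1 hr
  rw [mem_filter, mem_range] at hk
  exact Rat.den_natCast_div_natCast_of_coprime (by omega) hk.2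

theorem mem_fareyFiber {n : ℕ} (hn : 2 ≤ n) {r : ℚ} :
    r ∈ fareyFiber n ↔ 0 < r ∧ r < 1 ∧ r.den = n := by
  refine ⟨fun hr => ?_, fun ⟨h0, h1, hden⟩ => ?_⟩
  · obtain ⟨k, hk, rfl⟩ := mem_image.1 hr
    rw [mem_filter, mem_range] at hk
    have hk0 : k ≠ 0 := by
      rintro rfl
      rw [Nat.coprime_zero_right] at hk
      omega
    have hn' : (0 : ℚ) < n := by positivity
    exact ⟨by positivity, (div_lt_one hn').2 (by exact_mod_cast hk.1), den_of_mem_fareyFiber hr⟩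
  · subst hden
    have hnum := Rat.num_pos.2 h0
    have hlt := Rat.num_lt_denom_iff.2 h1
    refine mem_image.2 ⟨r.num.natAbs, mem_filter.2 ⟨mem_range.2 (by omega), r.reduced.symm⟩, ?_⟩
    rw [Nat.cast_natAbs, Int.cast_abs, abs_of_pos (Int.cast_pos.2 hnum), Rat.num_div_den]

theorem mem_fareyFinset {N : ℕ} {r : ℚ} : r ∈ fareyFinset N ↔ 0 < r ∧ r < 1 ∧ r.den ≤ N := by
  simp only [fareyFinset, mem_biUnion, mem_Icc]
  constructor
  · rintro ⟨n, ⟨hn2, hnN⟩, hr⟩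
    obtain ⟨h0, h1, rfl⟩ := (mem_fareyFiber hn2).1 hr
    exact ⟨h0, h1, hnN⟩
  · rintro ⟨h0, h1, hN⟩
    have h2 : 2 ≤ r.den := by
      have := Rat.num_pos.2 h0
      have := Rat.num_lt_denom_iff.2 h1
      omega
    exact ⟨r.den, ⟨h2, hN⟩, (mem_fareyFiber h2).2 ⟨h0, h1, rfl⟩⟩

theorem one_sub_mem_fareyFinset {N : ℕ} {r : ℚ} (hr : r ∈ fareyFinset N) :
    1 - r ∈ fareyFinset N := by
  obtain ⟨h0, h1, hN⟩ := mem_fareyFinset.1 hr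
  exact mem_fareyFinset.2 ⟨by linarith, by linarith, by simpa using hN⟩

theorem pairwise_disjoint_fareyFiber :
    Pairwise fun m n => Disjoint (fareyFiber m) (fareyFiber n) :=
  fun _ _ hmn => disjoint_left.2 fun _ hm hn =>
    hmn ((den_of_mem_fareyFiber hm).symm.trans (den_of_mem_fareyFiber hn))

theorem card_fareyFinset (N : ℕ) : #(fareyFinset N) = ∑ n ∈ Icc 2 N, n.totient := by
  rw [fareyFinset, card_biUnion (pairwise_disjoint_fareyFiber.set_pairwise _)]
  refine sum_congr rfl fun n hn => card_image_of_injective _ (natCast_div_natCast_injective ?_)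
  exact (zero_lt_two.trans_le (mem_Icc.1 hn).1).ne'

theorem prod_fareyFiber_two_sin {n : ℕ} (hn : n ≠ 0) :
    ∏ r ∈ fareyFiber n, 2 * sin (π * r) = (cyclotomic n ℝ).eval 1 := by
  rw [fareyFiber, prod_image (natCast_div_natCast_injective hn).injOn,
    eval_one_cyclotomic_eq_prod_two_sin hn]
  refine prod_congr rfl fun k _ => ?_
  push_cast
  rw [mul_div_assoc]

theorem prod_fareyFinset_two_sin (N : ℕ) :
    ∏ r ∈ fareyFinset N, 2 * sin (π * r) = Nat.lcmUpto N := by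
  rw [fareyFinset, prod_biUnion (pairwise_disjoint_fareyFiber.set_pairwise _),
    ← prod_Icc_eval_one_cyclotomic]
  exact prod_congr rfl fun n hn =>
    prod_fareyFiber_two_sin (zero_lt_two.trans_le (mem_Icc.1 hn).1).ne'

theorem sq_prod_Gamma_eq_prod_pi_div_sin {s : Finset ℝ} (hs : ∀ x ∈ s, 1 - x ∈ s) :
    (∏ x ∈ s, Gamma x) ^ 2 = ∏ x ∈ s, π / sin (π * x) := by
  have h_refl : ∏ x ∈ s, Gamma (1 - x) = ∏ x ∈ s, Gamma x :=
    prod_nbij' (1 - ·) (1 - ·) hs hs (fun x _ => sub_sub_cancel 1 x)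
      (fun x _ => sub_sub_cancel 1 x) fun _ _ => rfl
  calc (∏ x ∈ s, Gamma x) ^ 2 = (∏ x ∈ s, Gamma x) * ∏ x ∈ s, Gamma (1 - x) := by
        rw [sq, h_refl]
    _ = ∏ x ∈ s, π / sin (π * x) := by
      rw [← prod_mul_distrib]
      exact prod_congr rfl fun x _ => Gamma_mul_Gamma_one_sub x

theorem sq_prod_Gamma_fareyFinset (N : ℕ) :
    (∏ r ∈ fareyFinset N, Gamma r) ^ 2 = (2 * π) ^ #(fareyFinset N) / Nat.lcmUpto N := by
  set S : Finset ℝ := (fareyFinset N).image (↑)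
  have hinj : Set.InjOn ((↑) : ℚ → ℝ) (fareyFinset N) := Rat.cast_injective.injOn
  have hS : ∀ x ∈ S, 1 - x ∈ S := by
    simp only [S, mem_image]
    rintro _ ⟨r, hr, rfl⟩
    exact ⟨1 - r, one_sub_mem_fareyFinset hr, by push_cast; rfl⟩
  calc (∏ r ∈ fareyFinset N, Gamma r) ^ 2 = ∏ x ∈ S, π / sin (π * x) := by
        rw [← sq_prod_Gamma_eq_prod_pi_div_sin hS, prod_image hinj]
    _ = ∏ r ∈ fareyFinset N, 2 * π / (2 * sin (π * r)) := by
        rw [prod_image hinj]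
        exact prod_congr rfl fun r _ => (mul_div_mul_left _ _ two_ne_zero).symm
    _ = (2 * π) ^ #(fareyFinset N) / Nat.lcmUpto N := by
        rw [prod_div_distrib, prod_const, prod_fareyFinset_two_sin]

theorem eq_rpow_mul_rpow_of_sq_eq {x a b : ℝ} (m : ℕ) (hx : 0 ≤ x) (ha : 0 ≤ a) (hb : 0 ≤ b)
    (h : x ^ 2 = a ^ m / b) : x = a ^ ((m : ℝ) / 2) * b ^ (-(1 : ℝ) / 2) := by
  rw [← sqrt_sq hx, h, sqrt_eq_rpow, div_rpow (by positivity) hb, ← rpow_natCast, ← rpow_mul ha,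
    div_eq_mul_inv, neg_div, rpow_neg hb, mul_one_div]

theorem farey_gamma_prod'_general (N : ℕ) :
    ∏ᶠ r ∈ {r : ℚ | 0 < r ∧ r < 1 ∧ r.den ≤ N}, Real.Gamma (r : ℝ) =
      (2 * π) ^ (((∑ n ∈ Finset.Icc 2 N, n.totient : ℕ) : ℝ) / 2) *
        (((Finset.Icc 1 N).lcm id : ℕ) : ℝ) ^ (-(1 : ℝ) / 2) := by
  have h_set : {r : ℚ | 0 < r ∧ r < 1 ∧ r.den ≤ N} = fareyFinset N :=
    Set.ext fun _ => mem_fareyFinset.symm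
  have h_pos : 0 ≤ ∏ r ∈ fareyFinset N, Gamma r :=
    prod_nonneg fun r hr => (Gamma_pos_of_pos (by exact_mod_cast (mem_fareyFinset.1 hr).1)).le
  rw [h_set, finprod_mem_coe_finset, ← card_fareyFinset]
  exact eq_rpow_mul_rpow_of_sq_eq _ h_pos (by positivity) (by positivity)
    (sq_prod_Gamma_fareyFinset N)

theorem farey_gamma_prod' (N : ℕ) (hN : 1 ≤ N) :
    ∏ᶠ r ∈ {r : ℚ | 0 < r ∧ r < 1 ∧ r.den ≤ N}, Real.Gamma (r : ℝ) =
      (2 * π) ^ (((∑ n ∈ Finset.Icc 2 N, n.totient : ℕ) : ℝ) / 2) *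
        (((Finset.Icc 1 N).lcm id : ℕ) : ℝ) ^ (-(1 : ℝ) / 2) :=
  farey_gamma_prod'_general N
end
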